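/- arXiv:2005.08080 — 4 statements merged into one kernel-verified Lean document; each statement's English description precedes it below -/
import Mathlib

section
/- Let (w, m, α) be a magnetic weighted graph on a nonempty finite type V and assume the graph with edge set {{v,u} : w v u > 0} is connected (any two vertices are joined by a path of pairs with positive weight). Then 0 is an eigenvalue of Δ(w,m,α) if and only if α is trivial, i.e., there exists ξ : V → ℝ such that α v u ≡ ξ(u) − ξ(v) (mod 2π) for all v, u with w v u > 0. -/
/-!
Pairing `Δφ = 0` with `φ` gives `Σ_{v,u} w v u |φ v - e^{i α v u} φ u|² = 0`, so a kernel vector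
is parallel along every edge: `φ v = e^{i α v u} φ u`. Then `|φ|` is constant on the connected
graph, so `φ` vanishes nowhere and `ξ = -arg φ` is a potential for `α` modulo `2π`. Conversely, for
a potential `ξ`, the vector `e^{-i ξ}` lies in the kernel.
-/

/-- The magnetic weighted Laplacian `Δ(w,m,α)` as a matrix acting on `ℂ^V`:
`(Δφ)(v) = (1/m v) · Σ_u w v u · (φ(v) − exp(i·α v u)·φ(u))`. -/
noncomputable def magLap {V : Type} [Fintype V] [DecidableEq V]
    (w : V → V → ℝ) (m : V → ℝ) (α : V → V → ℝ) : Matrix V V ℂ :=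
  fun v u => (if v = u then (((∑ u', w v u') / m v : ℝ) : ℂ) else 0)
    - ((w v u / m v : ℝ) : ℂ) * Complex.exp (Complex.I * (α v u : ℝ))

open Complex ComplexConjugate Finset Matrix

theorem conj_mul_sub_add_conj_mul_sub {x y a : ℂ} (ha : a * conj a = 1) :
    conj x * (x - a * y) + conj y * (y - conj a * x) = normSq (x - a * y) := by
  rw [← mul_conj]
  simp only [map_sub, map_mul]
  linear_combination (-(y * conj y)) * ha

theorem exp_I_mul_ofReal_mul_conj (θ : ℝ) : cexp (I * θ) * conj (cexp (I * θ)) = 1 := by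
  rw [mul_conj, ← ofReal_one]
  simp [normSq_eq_norm_sq, mul_comm I]

theorem exists_int_eq_arg_sub_arg_add {x y : ℂ} {θ : ℝ} (hy : y ≠ 0)
    (h : x = cexp (I * θ) * y) : ∃ n : ℤ, θ = arg x - arg y + 2 * Real.pi * n := by
  have hangle : (θ : Real.Angle) = ↑(arg x - arg y) := by
    rw [Real.Angle.coe_sub, h, arg_mul_coe_angle (exp_ne_zero _) hy, mul_comm I, arg_exp_mul_I,
      Real.Angle.coe_toIocMod, add_sub_cancel_right]
  obtain ⟨n, hn⟩ := Real.Angle.angle_eq_iff_two_pi_dvd_sub.1 hangle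
  exact ⟨n, by linarith⟩

section Gauge

variable {V : Type} {r : V → V → Prop} {α : V → V → ℝ} {φ : V → ℂ}

theorem norm_eq_of_reflTransGen (h : ∀ v u, r v u → φ v = cexp (I * α v u) * φ u) {v u : V}
    (hvu : Relation.ReflTransGen r v u) : ‖φ v‖ = ‖φ u‖ := by
  induction hvu with
  | refl => rfl
  | tail _ hbc ih => rw [ih, h _ _ hbc, norm_mul, mul_comm I, norm_exp_ofReal_mul_I, one_mul]

theorem exists_potential_of_eq_exp_mul (hconn : ∀ v u, Relation.ReflTransGen r v u)
    (h : ∀ v u, r v u → φ v = cexp (I * α v u) * φ u) (hφ : φ ≠ 0) :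
    ∃ ξ : V → ℝ, ∀ v u, r v u → ∃ n : ℤ, α v u = ξ u - ξ v + 2 * Real.pi * n := by
  obtain ⟨v₀, hv₀⟩ := Function.ne_iff.1 hφ
  have hne : ∀ v, φ v ≠ 0 := fun v => by
    rw [← norm_ne_zero_iff, norm_eq_of_reflTransGen h (hconn v v₀), norm_ne_zero_iff]
    exact hv₀
  refine ⟨fun v => -arg (φ v), fun v u hvu => ?_⟩
  obtain ⟨n, hn⟩ := exists_int_eq_arg_sub_arg_add (hne u) (h v u hvu)
  exact ⟨n, by linarith⟩

theorem eq_exp_mul_of_potential {ξ : V → ℝ}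
    (hξ : ∀ v u, r v u → ∃ n : ℤ, α v u = ξ u - ξ v + 2 * Real.pi * n) (v u : V) (hvu : r v u) :
    cexp (I * ↑(-ξ v)) = cexp (I * α v u) * cexp (I * ↑(-ξ u)) := by
  obtain ⟨n, hn⟩ := hξ v u hvu
  rw [← exp_add, hn, ← mul_one (cexp (I * ↑(-ξ v))), ← exp_int_mul_two_pi_mul_I n, ← exp_add]
  push_cast
  ring_nf

end Gauge

section MagneticLaplacian

variable {V : Type} [Fintype V] {w : V → V → ℝ} {α : V → V → ℝ}

-- The left side is `2 ⟨Δφ, φ⟩_m`: the weights `m` cancel.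
theorem two_mul_sum_conj_mul_sum_eq (hw_symm : ∀ v u, w v u = w u v)
    (hα : ∀ v u, α v u = -α u v) (φ : V → ℂ) :
    2 * ∑ v, conj (φ v) * ∑ u, (w v u : ℂ) * (φ v - cexp (I * α v u) * φ u) =
      ∑ v, ∑ u, ((w v u * normSq (φ v - cexp (I * α v u) * φ u) : ℝ) : ℂ) := by
  have hconj : ∀ v u, conj (cexp (I * α v u)) = cexp (I * α u v) := fun v u => by
    rw [← exp_conj, hα u v]
    simp
  rw [two_mul]
  simp only [mul_sum]
  conv_lhs => arg 2; rw [sum_comm]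
  rw [← sum_add_distrib]
  refine sum_congr rfl fun v _ => ?_
  rw [← sum_add_distrib]
  refine sum_congr rfl fun u _ => ?_
  rw [hw_symm u v, ← hconj v u, mul_left_comm, mul_left_comm (conj (φ u)), ← mul_add,
    conj_mul_sub_add_conj_mul_sub (exp_I_mul_ofReal_mul_conj _)]
  push_cast
  rfl

variable [DecidableEq V] (w) (m : V → ℝ) (α)

theorem magLap_mulVec_apply (φ : V → ℂ) (v : V) :
    (magLap w m α *ᵥ φ) v = (m v : ℂ)⁻¹ * ∑ u, (w v u : ℂ) * (φ v - cexp (I * α v u) * φ u) := by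
  simp only [mulVec, dotProduct, magLap, sub_mul, ite_mul, zero_mul, sum_sub_distrib,
    sum_ite_eq, if_pos (mem_univ v), mul_sub, mul_sum]
  push_cast
  congr 1
  · rw [sum_div, sum_mul]; exact sum_congr rfl fun u _ => by ring
  · exact sum_congr rfl fun u _ => by ring

variable {w m α}

theorem magLap_mulVec_eq_zero_iff (hw_symm : ∀ v u, w v u = w u v)
    (hw_nonneg : ∀ v u, 0 ≤ w v u) (hm : ∀ v, m v ≠ 0) (hα : ∀ v u, α v u = -α u v)
    (φ : V → ℂ) :
    magLap w m α *ᵥ φ = 0 ↔ ∀ v u, 0 < w v u → φ v = cexp (I * α v u) * φ u := by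
  constructor
  · intro h v u hvu
    have hrow : ∀ v, ∑ u, (w v u : ℂ) * (φ v - cexp (I * α v u) * φ u) = 0 := fun v => by
      simpa [magLap_mulVec_apply, hm v] using congrFun h v
    have henergy : ∑ v, ∑ u, w v u * normSq (φ v - cexp (I * α v u) * φ u) = 0 := by
      have := two_mul_sum_conj_mul_sum_eq hw_symm hα φ
      simp only [hrow, mul_zero, sum_const_zero] at this
      exact_mod_cast this.symm
    have hterm_nonneg : ∀ v u, 0 ≤ w v u * normSq (φ v - cexp (I * α v u) * φ u) :=
      fun v u => mul_nonneg (hw_nonneg v u) (normSq_nonneg _)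
    rw [sum_eq_zero_iff_of_nonneg fun v _ => sum_nonneg fun u _ => hterm_nonneg v u] at henergy
    have hterm := (sum_eq_zero_iff_of_nonneg fun u _ => hterm_nonneg v u).1
      (henergy v (mem_univ v)) u (mem_univ u)
    rw [mul_eq_zero, normSq_eq_zero, sub_eq_zero] at hterm
    exact hterm.resolve_left hvu.ne'
  · intro h
    funext v
    rw [magLap_mulVec_apply, Pi.zero_apply]
    refine mul_eq_zero_of_right _ (sum_eq_zero fun u _ => ?_)
    rcases (hw_nonneg v u).eq_or_lt with hvu | hvu
    · simp [← hvu]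
    · simp [← h v u hvu]

end MagneticLaplacian

theorem stmt3_general {V : Type} [Fintype V] [DecidableEq V] [Nonempty V]
    (w : V → V → ℝ) (m : V → ℝ) (α : V → V → ℝ)
    (hw_symm : ∀ v u, w v u = w u v) (hw_nonneg : ∀ v u, 0 ≤ w v u)
    (hm : ∀ v, 0 < m v)
    (hα : ∀ v u, α v u = - α u v)
    (hconn : ∀ v u : V, Relation.ReflTransGen (fun a b => 0 < w a b) v u) :
    Module.End.HasEigenvalue (Matrix.toLin' (magLap w m α)) 0 ↔
      ∃ ξ : V → ℝ, ∀ v u, 0 < w v u →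
        ∃ n : ℤ, α v u = ξ u - ξ v + 2 * Real.pi * n := by
  simp only [Module.End.hasEigenvalue_iff, Module.End.eigenspace_zero, Submodule.ne_bot_iff,
    LinearMap.mem_ker, toLin'_apply,
    magLap_mulVec_eq_zero_iff hw_symm hw_nonneg (fun v => (hm v).ne') hα]
  constructor
  · rintro ⟨φ, hφ, hne⟩
    exact exists_potential_of_eq_exp_mul hconn hφ hne
  · rintro ⟨ξ, hξ⟩
    exact ⟨fun v => cexp (I * ↑(-ξ v)), eq_exp_mul_of_potential hξ,
      Function.ne_iff.2 ⟨Classical.arbitrary V, exp_ne_zero _⟩⟩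

/-- for a connected magnetic weighted graph, `0` is an eigenvalue
of `Δ(w,m,α)` iff the magnetic potential is trivial, i.e. there is `ξ : V → ℝ`
with `α v u ≡ ξ(u) − ξ(v) (mod 2π)` whenever `w v u > 0`. -/
theorem stmt3 {V : Type} [Fintype V] [DecidableEq V] [Nonempty V]
    (w : V → V → ℝ) (m : V → ℝ) (α : V → V → ℝ)
    (hw_symm : ∀ v u, w v u = w u v) (hw_nonneg : ∀ v u, 0 ≤ w v u)
    (hw_diag : ∀ v, w v v = 0) (hm : ∀ v, 0 < m v)
    (hα : ∀ v u, α v u = - α u v)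
    (hconn : ∀ v u : V, Relation.ReflTransGen (fun a b => 0 < w a b) v u) :
    Module.End.HasEigenvalue (Matrix.toLin' (magLap w m α)) 0 ↔
      ∃ ξ : V → ℝ, ∀ v u, 0 < w v u →
        ∃ n : ℤ, α v u = ξ u - ξ v + 2 * Real.pi * n :=
  stmt3_general w m α hw_symm hw_nonneg hm hα hconn
end

section
/- Let H, H', K, K' be finite-dimensional complex inner product spaces, and let d : H → K and d' : H' → K' be linear maps. Suppose there exist linear maps J⁰ : H' → H with ‖J⁰x‖ ≥ ‖x‖ for all x ∈ H', and J¹ : K' → K with ‖J¹y‖ ≤ ‖y‖ for all y ∈ K', such that d ∘ J⁰ = J¹ ∘ d'. Let λ_1 ≤ … ≤ λ_n (n = dim H) and λ'_1 ≤ … ≤ λ'_{n'} (n' = dim H') be the eigenvalues, in nondecreasing order with multiplicity, of the positive semidefinite self-adjoint operators d*d on H and d'*d' on H'. Then n ≥ n' and λ_k ≤ λ'_k for all 1 ≤ k ≤ n'. -/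
/-!
Min-max comparison. `J⁰` is injective since it does not shrink norms, so `n' ≤ n`. If
`V' ⊆ H'` is spanned by eigenvectors of `d'*d'` for its `k` smallest eigenvalues, then on the
`k`-dimensional subspace `J⁰ V'` of `H`,
`‖d (J⁰ y)‖² = ‖J¹ (d' y)‖² ≤ ‖d' y‖² ≤ λ'_k ‖y‖² ≤ λ'_k ‖J⁰ y‖²` (using `λ'_k ≥ 0`), so the
Rayleigh quotient of `d*d` is at most `λ'_k` there. Any `k`-dimensional subspace of `H` meets
the span of the eigenvectors of `d*d` for its `n - k + 1` largest eigenvalues, where the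
Rayleigh quotient is at least `λ_k`; hence `λ_k ≤ λ'_k`.
-/

open FiniteDimensional

/-- The eigenvalues (with algebraic multiplicity) of an endomorphism of a
finite-dimensional complex vector space whose spectrum is real, listed in
nondecreasing order: the real parts of the roots of the characteristic
polynomial, sorted; `opEig T k` is the `(k+1)`-st smallest (0-based index). -/
noncomputable def opEig {H : Type} [NormedAddCommGroup H] [InnerProductSpace ℂ H]
    [FiniteDimensional ℂ H] (T : H →ₗ[ℂ] H) (k : ℕ) : ℝ :=
  (((LinearMap.charpoly T).roots.map Complex.re).sort (· ≤ ·)).getD k 0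

open Module LinearMap
open scoped InnerProductSpace

theorem Submodule.inf_ne_bot_of_finrank_lt_add {K V : Type*} [DivisionRing K] [AddCommGroup V]
    [Module K V] [FiniteDimensional K V] {s t : Submodule K V}
    (h : finrank K V < finrank K s + finrank K t) : s ⊓ t ≠ ⊥ := fun hst =>
  h.not_ge (Submodule.finrank_add_finrank_le_of_disjoint (disjoint_iff.mpr hst))

theorem Module.Basis.finrank_span_image {ι K M : Type*} [DivisionRing K] [AddCommGroup M]
    [Module K M] (b : Basis ι K M) (s : Finset ι) :
    finrank K (Submodule.span K (b '' s)) = s.card := by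
  rw [Set.image_eq_range]
  exact (finrank_span_eq_card (b.linearIndependent.comp _ Subtype.val_injective)).trans (by simp)

theorem OrthonormalBasis.repr_eq_zero_of_mem_span {ι 𝕜 E : Type*} [Fintype ι] [RCLike 𝕜]
    [NormedAddCommGroup E] [InnerProductSpace 𝕜 E] (e : OrthonormalBasis ι 𝕜 E) {s : Set ι}
    {x : E} (hx : x ∈ Submodule.span 𝕜 (e '' s)) {i : ι} (hi : i ∉ s) : e.repr x i = 0 := by
  rw [← e.coe_toBasis, Basis.mem_span_image] at hx
  simpa using mt (@hx i) hi

theorem LinearMap.re_inner_adjoint_comp_self_apply {𝕜 E F : Type*} [RCLike 𝕜]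
    [NormedAddCommGroup E] [InnerProductSpace 𝕜 E] [FiniteDimensional 𝕜 E]
    [NormedAddCommGroup F] [InnerProductSpace 𝕜 F] [FiniteDimensional 𝕜 F]
    (d : E →ₗ[𝕜] F) (x : E) : RCLike.re ⟪x, (adjoint d ∘ₗ d) x⟫_𝕜 = ‖d x‖ ^ 2 := by
  rw [comp_apply, adjoint_inner_right, inner_self_eq_norm_sq]

namespace LinearMap.IsSymmetric

variable {E : Type} [NormedAddCommGroup E] [InnerProductSpace ℂ E] [FiniteDimensional ℂ E]
  {T : E →ₗ[ℂ] E}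

/-- Mathlib lists the eigenvalues in decreasing order, `opEig` in increasing order. -/
theorem opEig_eq_eigenvalues_rev (hT : T.IsSymmetric) {k : ℕ} (hk : k < finrank ℂ E) :
    opEig T k = hT.eigenvalues rfl (Fin.rev ⟨k, hk⟩) := by
  have hsort : (T.charpoly.roots.map Complex.re).sort (· ≤ ·)
      = (List.ofFn (hT.eigenvalues rfl)).reverse := by
    have h := hT.sort_roots_charpoly_eq_eigenvalues rfl
    rw [show (RCLike.re : ℂ → ℝ) = Complex.re from funext fun _ => RCLike.re_to_complex] at h
    rw [← h]
    refine List.Perm.eq_reverse_of_sortedLE_of_sortedGE ?_ ?_ ?_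
    · rw [← Multiset.coe_eq_coe, Multiset.sort_eq, Multiset.sort_eq]
    · exact List.sortedLE_iff_pairwise.mpr (Multiset.pairwise_sort _ _)
    · exact List.sortedGE_iff_pairwise.mpr (Multiset.pairwise_sort _ _)
  rw [opEig, hsort, List.getD_eq_getElem _ _ (by simpa using hk), List.getElem_reverse,
    List.getElem_ofFn]
  congr 1
  ext
  simp only [List.length_ofFn, Fin.val_rev]
  omega

variable {n : ℕ}

theorem re_inner_apply_eq_sum (hT : T.IsSymmetric) (hn : finrank ℂ E = n) (x : E) :
    (⟪x, T x⟫_ℂ).re = ∑ i, hT.eigenvalues hn i * ‖(hT.eigenvectorBasis hn).repr x i‖ ^ 2 := by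
  rw [← (hT.eigenvectorBasis hn).repr.inner_map_map, PiLp.inner_apply, Complex.re_sum]
  refine Finset.sum_congr rfl fun i _ => ?_
  rw [hT.eigenvectorBasis_apply_self_apply, RCLike.inner_apply, mul_assoc, RCLike.mul_conj]
  norm_cast

theorem re_inner_apply_le_of_mem_span (hT : T.IsSymmetric) (hn : finrank ℂ E = n)
    {s : Set (Fin n)} {c : ℝ} (hc : ∀ i ∈ s, hT.eigenvalues hn i ≤ c)
    {x : E} (hx : x ∈ Submodule.span ℂ (hT.eigenvectorBasis hn '' s)) :
    (⟪x, T x⟫_ℂ).re ≤ c * ‖x‖ ^ 2 := by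
  rw [hT.re_inner_apply_eq_sum hn, ← (hT.eigenvectorBasis hn).repr.norm_map,
    EuclideanSpace.norm_sq_eq, Finset.mul_sum]
  refine Finset.sum_le_sum fun i _ => ?_
  by_cases hi : i ∈ s
  · gcongr
    exact hc i hi
  · simp [(hT.eigenvectorBasis hn).repr_eq_zero_of_mem_span hx hi]

theorem le_re_inner_apply_of_mem_span (hT : T.IsSymmetric) (hn : finrank ℂ E = n)
    {s : Set (Fin n)} {c : ℝ} (hc : ∀ i ∈ s, c ≤ hT.eigenvalues hn i)
    {x : E} (hx : x ∈ Submodule.span ℂ (hT.eigenvectorBasis hn '' s)) :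
    c * ‖x‖ ^ 2 ≤ (⟪x, T x⟫_ℂ).re := by
  rw [hT.re_inner_apply_eq_sum hn, ← (hT.eigenvectorBasis hn).repr.norm_map,
    EuclideanSpace.norm_sq_eq, Finset.mul_sum]
  refine Finset.sum_le_sum fun i _ => ?_
  by_cases hi : i ∈ s
  · gcongr
    exact hc i hi
  · simp [(hT.eigenvectorBasis hn).repr_eq_zero_of_mem_span hx hi]

theorem exists_finrank_eq_forall_re_inner_le_opEig (hT : T.IsSymmetric) {k : ℕ}
    (hk : k < finrank ℂ E) : ∃ V : Submodule ℂ E, finrank ℂ V = k + 1 ∧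
      ∀ x ∈ V, (⟪x, T x⟫_ℂ).re ≤ opEig T k * ‖x‖ ^ 2 := by
  refine ⟨Submodule.span ℂ (hT.eigenvectorBasis rfl '' ↑(Finset.Ici (Fin.rev ⟨k, hk⟩))),
    ?_, fun x hx => ?_⟩
  · rw [← OrthonormalBasis.coe_toBasis, Basis.finrank_span_image, Fin.card_Ici, Fin.val_rev,
      Fin.val_mk]
    omega
  · rw [hT.opEig_eq_eigenvalues_rev hk]
    exact hT.re_inner_apply_le_of_mem_span rfl
      (fun i hi => hT.eigenvalues_antitone rfl (Finset.mem_Ici.mp hi)) hx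

theorem exists_finrank_eq_forall_opEig_le_re_inner (hT : T.IsSymmetric) {k : ℕ}
    (hk : k < finrank ℂ E) : ∃ W : Submodule ℂ E, finrank ℂ W = finrank ℂ E - k ∧
      ∀ x ∈ W, opEig T k * ‖x‖ ^ 2 ≤ (⟪x, T x⟫_ℂ).re := by
  refine ⟨Submodule.span ℂ (hT.eigenvectorBasis rfl '' ↑(Finset.Iic (Fin.rev ⟨k, hk⟩))),
    ?_, fun x hx => ?_⟩
  · rw [← OrthonormalBasis.coe_toBasis, Basis.finrank_span_image, Fin.card_Iic, Fin.val_rev,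
      Fin.val_mk]
    omega
  · rw [hT.opEig_eq_eigenvalues_rev hk]
    exact hT.le_re_inner_apply_of_mem_span rfl
      (fun i hi => hT.eigenvalues_antitone rfl (Finset.mem_Iic.mp hi)) hx

/-- The easy half of the Courant–Fischer min-max characterisation of `opEig T k`. -/
theorem opEig_le_of_forall_re_inner_le (hT : T.IsSymmetric) {k : ℕ} {V : Submodule ℂ E}
    (hV : k < finrank ℂ V) {c : ℝ} (hc : ∀ x ∈ V, (⟪x, T x⟫_ℂ).re ≤ c * ‖x‖ ^ 2) :
    opEig T k ≤ c := by
  have hk : k < finrank ℂ E := hV.trans_le V.finrank_le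
  obtain ⟨W, hW, hWle⟩ := hT.exists_finrank_eq_forall_opEig_le_re_inner hk
  obtain ⟨z, hz, hz0⟩ := Submodule.exists_mem_ne_zero_of_ne_bot
    (Submodule.inf_ne_bot_of_finrank_lt_add (s := V) (t := W) (by omega))
  have hz2 : 0 < ‖z‖ ^ 2 := by positivity
  exact le_of_mul_le_mul_right ((hWle z hz.2).trans (hc z hz.1)) hz2

end LinearMap.IsSymmetric

theorem LinearMap.opEig_adjoint_comp_self_nonneg {E F : Type} [NormedAddCommGroup E]
    [InnerProductSpace ℂ E] [FiniteDimensional ℂ E] [NormedAddCommGroup F]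
    [InnerProductSpace ℂ F] [FiniteDimensional ℂ F] (d : E →ₗ[ℂ] F) {k : ℕ}
    (hk : k < finrank ℂ E) : 0 ≤ opEig (adjoint d ∘ₗ d) k := by
  rw [d.isSymmetric_adjoint_comp_self.opEig_eq_eigenvalues_rev hk]
  exact d.isPositive_adjoint_comp_self.nonneg_eigenvalues rfl _

/-- if `d ∘ J⁰ = J¹ ∘ d'` with `J⁰` norm-nondecreasing and `J¹`
norm-nonincreasing, then `dim H ≥ dim H'` and the ordered eigenvalues of
`d*d` are dominated by those of `d'*d'`: `λ_k ≤ λ'_k` for all `1 ≤ k ≤ dim H'`. -/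
theorem stmt5 {H K H' K' : Type}
    [NormedAddCommGroup H] [InnerProductSpace ℂ H] [FiniteDimensional ℂ H]
    [NormedAddCommGroup K] [InnerProductSpace ℂ K] [FiniteDimensional ℂ K]
    [NormedAddCommGroup H'] [InnerProductSpace ℂ H'] [FiniteDimensional ℂ H']
    [NormedAddCommGroup K'] [InnerProductSpace ℂ K'] [FiniteDimensional ℂ K']
    (d : H →ₗ[ℂ] K) (d' : H' →ₗ[ℂ] K')
    (J0 : H' →ₗ[ℂ] H) (J1 : K' →ₗ[ℂ] K)
    (hJ0 : ∀ x : H', ‖x‖ ≤ ‖J0 x‖)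
    (hJ1 : ∀ y : K', ‖J1 y‖ ≤ ‖y‖)
    (hcomm : d ∘ₗ J0 = J1 ∘ₗ d') :
    Module.finrank ℂ H' ≤ Module.finrank ℂ H ∧
      ∀ k : ℕ, 1 ≤ k → k ≤ Module.finrank ℂ H' →
        opEig (LinearMap.adjoint d ∘ₗ d) (k - 1)
          ≤ opEig (LinearMap.adjoint d' ∘ₗ d') (k - 1) := by
  have hJ0_inj : Function.Injective J0 := injective_iff_map_eq_zero J0 |>.mpr fun x hx =>
    norm_le_zero_iff.mp (by simpa [hx] using hJ0 x)
  refine ⟨finrank_le_finrank_of_injective hJ0_inj, fun k hk1 hk => ?_⟩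
  obtain ⟨V', hV', hV'le⟩ :=
    d'.isSymmetric_adjoint_comp_self.exists_finrank_eq_forall_re_inner_le_opEig (k := k - 1)
      (by omega)
  refine d.isSymmetric_adjoint_comp_self.opEig_le_of_forall_re_inner_le (V := V'.map J0) ?_ ?_
  · rw [← (Submodule.equivMapOfInjective J0 hJ0_inj V').finrank_eq]
    omega
  · rintro _ ⟨y, hy, rfl⟩
    calc RCLike.re ⟪J0 y, (adjoint d ∘ₗ d) (J0 y)⟫_ℂ
        = ‖J1 (d' y)‖ ^ 2 := by
          rw [re_inner_adjoint_comp_self_apply, ← comp_apply, hcomm, comp_apply]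
      _ ≤ ‖d' y‖ ^ 2 := by gcongr; exact hJ1 _
      _ = RCLike.re ⟪y, (adjoint d' ∘ₗ d') y⟫_ℂ := (re_inner_adjoint_comp_self_apply d' y).symm
      _ ≤ opEig (adjoint d' ∘ₗ d') (k - 1) * ‖y‖ ^ 2 := hV'le y hy
      _ ≤ opEig (adjoint d' ∘ₗ d') (k - 1) * ‖J0 y‖ ^ 2 := by
        gcongr
        · exact d'.opEig_adjoint_comp_self_nonneg (by omega)
        · exact hJ0 y
end

section
/- Let G be a connected finite simple graph with n vertices and m edges that contains a clique on d vertices (d ≥ 2), and suppose m < (d−1)(d+2)/2. Then d is an eigenvalue of the combinatorial Laplacian L(G) = D(G) − A(G) of G, with multiplicity at least (d−1)(d+2)/2 − m; equivalently, the number of indices k with λ_k(G) = d is at least (d−1)(d+2)/2 − m, where λ_1(G) ≤ … ≤ λ_n(G) are the eigenvalues of L(G) in nondecreasing order with multiplicity. -/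
/-!
Let `s` be a `d`-clique and `P ⊆ s` the set of its vertices having no neighbour outside `s`.
For `a, b ∈ P` the vector `e_a - e_b` is a Laplacian eigenvector with eigenvalue `d`, so the
`d`-eigenspace has dimension at least `|P| - 1`, and the algebraic multiplicity of `d` is at least
that. Each vertex of `s \ P` lies on an edge leaving `s`, and distinct vertices give distinct such
edges, so `m ≥ C(d, 2) + d - |P|`, i.e. `|P| - 1 ≥ (d - 1)(d + 2)/2 - m`; this is at least `1`
when `m < (d - 1)(d + 2)/2`.
-/

open scoped Classical

open Finset Matrix

theorem Pi.linearIndependent_single_sub_single {R ι : Type*} [Ring R] [DecidableEq ι]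
    {t : Finset ι} {a : ι} (ha : a ∉ t) :
    LinearIndependent R fun i : t => (Pi.single (i : ι) (1 : R) - Pi.single a 1 : ι → R) := by
  refine LinearIndependent.of_comp (LinearMap.funLeft R R ((↑) : t → ι)) ?_
  convert Pi.linearIndependent_single_one t R using 1
  ext i j
  have hj : (j : ι) ≠ a := fun h => ha (h ▸ j.2)
  simp only [LinearMap.funLeft_apply, Function.comp_apply, Pi.sub_apply, Pi.single_apply, hj,
    if_false, sub_zero, Subtype.ext_iff]

theorem Matrix.finrank_eigenspace_le_count_roots_charpoly {K n : Type*} [Field K] [DecidableEq K]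
    [Fintype n] [DecidableEq n] (A : Matrix n n K) (μ : K) :
    Module.finrank K (Module.End.eigenspace (toLin' A) μ) ≤ A.charpoly.roots.count μ := by
  rw [Polynomial.count_roots, ← charpoly_toLin']
  exact LinearMap.finrank_eigenspace_le _ μ

theorem Nat.sub_one_mul_add_two_div_two (d : ℕ) :
    (d - 1) * (d + 2) / 2 = d.choose 2 + (d - 1) := by
  rw [show (d - 1) * (d + 2) = d * (d - 1) + (d - 1) * 2 by ring,
    Nat.add_mul_div_right _ _ two_pos, Nat.choose_two_right]

namespace SimpleGraph

variable {V : Type*} [Fintype V] [DecidableEq V] {G : SimpleGraph V} [DecidableRel G.Adj]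
  {s : Finset V}

theorem IsClique.neighborFinset_eq_erase (hs : G.IsClique s) {a : V} (ha : a ∈ s)
    (haN : G.neighborFinset a ⊆ s) : G.neighborFinset a = s.erase a := by
  ext w
  simp only [mem_erase]
  refine ⟨fun h => ⟨(G.ne_of_adj ((mem_neighborFinset ..).1 h)).symm, haN h⟩, ?_⟩
  rintro ⟨hwa, hw⟩
  exact (mem_neighborFinset ..).2 (hs ha hw (Ne.symm hwa))

theorem IsClique.degree_add_one (hs : G.IsClique s) {a : V} (ha : a ∈ s)
    (haN : G.neighborFinset a ⊆ s) : G.degree a + 1 = #s := by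
  rw [← card_neighborFinset_eq_degree, hs.neighborFinset_eq_erase ha haN, card_erase_add_one ha]

theorem IsClique.lapMatrix_mulVec_single_sub_single {R : Type*} [Ring R] (hs : G.IsClique s)
    {a b : V} (ha : a ∈ s) (hb : b ∈ s) (haN : G.neighborFinset a ⊆ s)
    (hbN : G.neighborFinset b ⊆ s) :
    G.lapMatrix R *ᵥ (Pi.single a 1 - Pi.single b 1) =
      (#s : R) • (Pi.single a 1 - Pi.single b 1) := by
  rcases eq_or_ne a b with rfl | hab
  · simp
  have hdeg : ∀ v ∈ s, G.neighborFinset v ⊆ s → (G.degree v : R) = #s - 1 :=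
    fun v hv hvN => by
      rw [← hs.degree_add_one hv hvN, Nat.cast_succ, add_sub_cancel_right]
  ext v
  rw [lapMatrix_mulVec_apply]
  simp only [Pi.sub_apply, sum_sub_distrib, Pi.single_apply, sum_ite_eq', mem_neighborFinset,
    Pi.smul_apply, smul_eq_mul]
  by_cases hva : v = a
  · subst hva
    simp [hdeg v ha haN, hab, hs ha hb hab]
  by_cases hvb : v = b
  · subst hvb
    simp [hdeg v hb hbN, hva, hs hb ha hva]
  by_cases hv : v ∈ s
  · simp [hva, hvb, hs hv ha hva, hs hv hb hvb]
  · have hva' : ¬ G.Adj v a := fun h => hv (haN ((mem_neighborFinset ..).2 h.symm))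
    have hvb' : ¬ G.Adj v b := fun h => hv (hbN ((mem_neighborFinset ..).2 h.symm))
    simp [hva, hvb, hva', hvb']

theorem IsClique.choose_two_le_card_filter_edgeFinset (hs : G.IsClique s) :
    (#s).choose 2 ≤ #{e ∈ G.edgeFinset | ∀ v ∈ e, v ∈ s} := by
  rw [← Sym2.card_image_offDiag]
  refine card_le_card fun e he => ?_
  obtain ⟨⟨x, y⟩, hxy, rfl⟩ := mem_image.1 he
  obtain ⟨hx, hy, hne⟩ := mem_offDiag.1 hxy
  simp only [mem_filter, mem_edgeFinset, Function.uncurry_apply_pair, mem_edgeSet, Sym2.mem_iff]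
  exact ⟨hs hx hy hne, by rintro v (rfl | rfl) <;> assumption⟩

theorem card_filter_not_neighborFinset_subset_le (s : Finset V) :
    #{v ∈ s | ¬ G.neighborFinset v ⊆ s} ≤
      #{e ∈ G.edgeFinset | ¬ ∀ v ∈ e, v ∈ s} := by
  refine card_le_card_of_forall_subsingleton (· ∈ ·) (fun v hv => ?_) (fun e he => ?_)
  · obtain ⟨hvs, hvN⟩ := mem_filter.1 hv
    obtain ⟨w, hw, hws⟩ := not_subset.1 hvN
    refine ⟨s(v, w), ?_, Sym2.mem_mk_left v w⟩
    simp only [mem_filter, mem_edgeFinset, mem_edgeSet, ← mem_neighborFinset]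
    exact ⟨hw, fun h => hws (h w (Sym2.mem_mk_right v w))⟩
  · -- an edge leaving `s` has at most one endpoint in `s`
    rintro x ⟨hx, hxe⟩ y ⟨hy, hye⟩
    by_contra hxy
    refine (mem_filter.1 he).2 fun v hv => ?_
    rw [(Sym2.mem_and_mem_iff hxy).1 ⟨hxe, hye⟩, Sym2.mem_iff] at hv
    rcases hv with rfl | rfl
    exacts [(mem_filter.1 hx).1, (mem_filter.1 hy).1]

theorem IsClique.choose_two_add_card_filter_le_card_edgeFinset (hs : G.IsClique s) :
    (#s).choose 2 + #{v ∈ s | ¬ G.neighborFinset v ⊆ s} ≤ #G.edgeFinset := by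
  rw [← card_filter_add_card_filter_not (s := G.edgeFinset) (fun e => ∀ v ∈ e, v ∈ s)]
  exact add_le_add hs.choose_two_le_card_filter_edgeFinset
    (card_filter_not_neighborFinset_subset_le s)

theorem IsClique.card_filter_sub_one_le_finrank_eigenspace {K : Type*} [Field K]
    (hs : G.IsClique s) :
    #{v ∈ s | G.neighborFinset v ⊆ s} - 1 ≤
      Module.finrank K (Module.End.eigenspace (toLin' (G.lapMatrix K)) (#s : K)) := by
  set P := {v ∈ s | G.neighborFinset v ⊆ s}
  obtain hP | ⟨a, ha⟩ := P.eq_empty_or_nonempty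
  · simp [hP]
  have hli := Pi.linearIndependent_single_sub_single (R := K) (t := P.erase a) (a := a)
    (by simp)
  have hmem : ∀ v ∈ P, v ∈ s ∧ G.neighborFinset v ⊆ s := fun v hv => mem_filter.1 hv
  calc #P - 1 = Module.finrank K (Submodule.span K (Set.range fun i : P.erase a =>
        (Pi.single (i : V) (1 : K) - Pi.single a 1 : V → K))) := by
        rw [finrank_span_eq_card hli, Fintype.card_coe, card_erase_of_mem ha]
    _ ≤ _ := by
        refine Submodule.finrank_mono (Submodule.span_le.2 ?_)
        rintro - ⟨⟨v, hv⟩, rfl⟩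
        obtain ⟨hvs, hvN⟩ := hmem v (mem_of_mem_erase hv)
        obtain ⟨has, haN⟩ := hmem a ha
        rw [SetLike.mem_coe, Module.End.mem_eigenspace_iff, toLin'_apply]
        exact hs.lapMatrix_mulVec_single_sub_single hvs has hvN haN

end SimpleGraph

theorem stmt17_general {V : Type} [Fintype V] [DecidableEq V]
    (G : SimpleGraph V) [DecidableRel G.Adj]
    (d : ℕ)
    (hclique : ¬ G.CliqueFree d)
    (hm : G.edgeFinset.card < (d - 1) * (d + 2) / 2) :
    Module.End.HasEigenvalue (Matrix.toLin' (G.lapMatrix ℝ)) (d : ℝ)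
    ∧ (d - 1) * (d + 2) / 2 - G.edgeFinset.card
        ≤ Multiset.count ((d : ℝ)) (G.lapMatrix ℝ).charpoly.roots := by
  obtain ⟨s, hs⟩ := not_forall_not.1 hclique
  have hedges := hs.isClique.choose_two_add_card_filter_le_card_edgeFinset
  have hdim := hs.isClique.card_filter_sub_one_le_finrank_eigenspace (K := ℝ)
  have hsplit := card_filter_add_card_filter_not (s := s) (G.neighborFinset · ⊆ s)
  rw [hs.card_eq] at hedges hdim hsplit
  rw [Nat.sub_one_mul_add_two_div_two] at hm ⊢
  refine ⟨Module.End.hasEigenvalue_iff.2 fun hbot => ?_, ?_⟩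
  · rw [hbot, finrank_bot] at hdim
    omega
  · have hmult := (G.lapMatrix ℝ).finrank_eigenspace_le_count_roots_charpoly (d : ℝ)
    omega

/-- if a connected graph `G` with `m` edges contains a `d`-clique
(`d ≥ 2`) and `m < (d−1)(d+2)/2`, then `d` is an eigenvalue of the
combinatorial Laplacian `L(G) = D(G) − A(G)` with multiplicity at least
`(d−1)(d+2)/2 − m` (multiplicity = number of times `d` occurs as a root of
the characteristic polynomial, counted with multiplicity). -/
theorem stmt17 {V : Type} [Fintype V] [DecidableEq V]
    (G : SimpleGraph V) [DecidableRel G.Adj]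
    (hconn : G.Connected) (d : ℕ) (hd : 2 ≤ d)
    (hclique : ¬ G.CliqueFree d)
    (hm : G.edgeFinset.card < (d - 1) * (d + 2) / 2) :
    Module.End.HasEigenvalue (Matrix.toLin' (G.lapMatrix ℝ)) (d : ℝ)
    ∧ (d - 1) * (d + 2) / 2 - G.edgeFinset.card
        ≤ Multiset.count ((d : ℝ)) (G.lapMatrix ℝ).charpoly.roots :=
  stmt17_general G d hclique hm
end

section
/- Let G be a connected finite simple graph and d ≥ 2 a natural number. If d is not an eigenvalue of the combinatorial Laplacian L(G) = D(G) − A(G) of G, and G has fewer than (d−1)(d+2)/2 edges, then G contains no clique on d vertices (G is d-clique-free). -/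
open Finset


/-- spectral exclusion of cliques: if `d ≥ 2` is not an
eigenvalue of the combinatorial Laplacian `L(G) = D(G) − A(G)` of a connected
graph `G`, and `G` has fewer than `(d−1)(d+2)/2` edges, then `G` contains no
clique on `d` vertices. -/
theorem stmt18 {V : Type} [Fintype V] [DecidableEq V]
    (G : SimpleGraph V) [DecidableRel G.Adj]
    (hconn : G.Connected) (d : ℕ) (hd : 2 ≤ d)
    (heig : ¬ Module.End.HasEigenvalue (Matrix.toLin' (G.lapMatrix ℝ)) (d : ℝ))
    (hm : G.edgeFinset.card < (d - 1) * (d + 2) / 2) :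
    G.CliqueFree d := by
  classical
  by_contra hcf
  rw [SimpleGraph.CliqueFree] at hcf
  push_neg at hcf
  obtain ⟨s, hclique, hcard⟩ := hcf
  -- arithmetic on the edge bound
  have hm' : G.edgeFinset.card < d.choose 2 + (d - 1) := by
    have h1 : (d - 1) * (d + 2) = d * (d - 1) + (d - 1) * 2 := by
      obtain ⟨k, rfl⟩ := Nat.exists_eq_add_of_le hd
      have e1 : 2 + k - 1 = k + 1 := by omega
      rw [e1]; ring
    have h2 : (d - 1) * (d + 2) / 2 = d * (d - 1) / 2 + (d - 1) := by
      rw [h1, Nat.add_mul_div_right _ _ (by norm_num : 0 < 2)]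
    rwa [Nat.choose_two_right, ← h2]
  -- the clique edges
  set C : Finset (Sym2 V) := s.sym2.filter (fun e => ¬ e.IsDiag) with hCdef
  have hCsub : C ⊆ G.edgeFinset := by
    intro e he
    rw [mem_filter] at he
    induction e with
    | h a b =>
      rw [Finset.mk_mem_sym2_iff] at he
      have hne : a ≠ b := by simpa [Sym2.mk_isDiag_iff] using he.2
      simp only [SimpleGraph.mem_edgeFinset, SimpleGraph.mem_edgeSet]
      exact hclique he.1.1 he.1.2 hne
  have hCcard : C.card = d.choose 2 := by
    have hdiag : s.sym2.filter (fun e => e.IsDiag) = s.image (fun a => s(a, a)) := by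
      ext e
      simp only [mem_filter, mem_image]
      constructor
      · rintro ⟨he, hdg⟩
        induction e with
        | h a b =>
          rw [Sym2.mk_isDiag_iff] at hdg
          subst hdg
          exact ⟨a, (Finset.mk_mem_sym2_iff.mp he).1, rfl⟩
      · rintro ⟨a, ha, rfl⟩
        exact ⟨Finset.mk_mem_sym2_iff.mpr ⟨ha, ha⟩, Sym2.mk_isDiag_iff.mpr rfl⟩
    have hdiagcard : (s.sym2.filter (fun e => e.IsDiag)).card = d := by
      rw [hdiag, Finset.card_image_of_injective _ (fun a b h => by
        simpa [Sym2.eq_iff] using h), hcard]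
    have htot := Finset.card_filter_add_card_filter_not
      (s := s.sym2) (p := fun e => e.IsDiag)
    have htot' : (s.sym2.filter (fun e => e.IsDiag)).card + C.card = s.sym2.card := htot
    have hs2 : s.sym2.card = (d + 1).choose 2 := by
      rw [Finset.card_sym2, hcard]
    have : (d + 1).choose 2 = d + d.choose 2 := by
      rw [Nat.choose_succ_succ, Nat.choose_one_right]
    omega
  -- clique vertices with an outside neighbor
  set T : Finset V := s.filter (fun u => ∃ w, w ∉ s ∧ G.Adj u w) with hTdef
  set f : V → Sym2 V := fun u =>
    if h : ∃ w, w ∉ s ∧ G.Adj u w then s(u, h.choose) else s(u, u) with hfdef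
  have hfspec : ∀ u ∈ T, ∃ w, w ∉ s ∧ G.Adj u w ∧ f u = s(u, w) := by
    intro u hu
    have h := (mem_filter.mp hu).2
    exact ⟨h.choose, h.choose_spec.1, h.choose_spec.2, by simp [hfdef, h]⟩
  have hTmaps : ∀ u ∈ T, f u ∈ G.edgeFinset \ C := by
    intro u hu
    obtain ⟨w, hw, hadj, hfu⟩ := hfspec u hu
    rw [hfu, mem_sdiff]
    refine ⟨by simpa [SimpleGraph.mem_edgeFinset] using hadj, ?_⟩
    simp only [hCdef, mem_filter, Finset.mk_mem_sym2_iff, not_and]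
    intro h
    exact absurd h.2 hw
  have hTinj : Set.InjOn f T := by
    intro a ha b hb hab
    obtain ⟨w, hw, -, hfa⟩ := hfspec a ha
    obtain ⟨w', hw', -, hfb⟩ := hfspec b hb
    rw [hfa, hfb, Sym2.eq_iff] at hab
    rcases hab with ⟨h1, -⟩ | ⟨h1, h2⟩
    · exact h1
    · exact absurd ((mem_filter.mp ha).1) (h1 ▸ hw')
  have hTcard : T.card ≤ d - 2 := by
    have himg : (T.image f).card = T.card := Finset.card_image_of_injOn hTinj
    have hdisj : Disjoint C (T.image f) := by
      rw [Finset.disjoint_right]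
      intro e he
      obtain ⟨u, hu, rfl⟩ := Finset.mem_image.mp he
      exact fun hC => (mem_sdiff.mp (hTmaps u hu)).2 hC
    have hsub : C ∪ T.image f ⊆ G.edgeFinset := by
      apply Finset.union_subset hCsub
      intro e he
      obtain ⟨u, hu, rfl⟩ := Finset.mem_image.mp he
      exact (mem_sdiff.mp (hTmaps u hu)).1
    have := Finset.card_le_card hsub
    rw [Finset.card_union_of_disjoint hdisj, hCcard, himg] at this
    omega
  -- two clique vertices with all neighbors inside s
  have hTs : T ⊆ s := Finset.filter_subset _ _
  have h2card : 2 ≤ (s \ T).card := by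
    rw [Finset.card_sdiff_of_subset hTs, hcard]
    omega
  obtain ⟨u, hu, v, hv, huv⟩ := Finset.one_lt_card.mp h2card
  have hus : u ∈ s := (mem_sdiff.mp hu).1
  have hvs : v ∈ s := (mem_sdiff.mp hv).1
  have hNu : ∀ w, G.Adj u w → w ∈ s := by
    intro w hw
    by_contra hws
    exact (mem_sdiff.mp hu).2 (mem_filter.mpr ⟨hus, w, hws, hw⟩)
  have hNv : ∀ w, G.Adj v w → w ∈ s := by
    intro w hw
    by_contra hws
    exact (mem_sdiff.mp hv).2 (mem_filter.mpr ⟨hvs, w, hws, hw⟩)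
  have hnbru : G.neighborFinset u = s.erase u := by
    ext w
    simp only [SimpleGraph.mem_neighborFinset, Finset.mem_erase]
    constructor
    · intro h; exact ⟨(G.ne_of_adj h).symm, hNu w h⟩
    · rintro ⟨h1, h2⟩; exact hclique hus h2 (fun h => h1 h.symm)
  have hnbrv : G.neighborFinset v = s.erase v := by
    ext w
    simp only [SimpleGraph.mem_neighborFinset, Finset.mem_erase]
    constructor
    · intro h; exact ⟨(G.ne_of_adj h).symm, hNv w h⟩
    · rintro ⟨h1, h2⟩; exact hclique hvs h2 (fun h => h1 h.symm)
  have hdegu : G.degree u = d - 1 := by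
    rw [SimpleGraph.degree, hnbru, Finset.card_erase_of_mem hus, hcard]
  have hdegv : G.degree v = d - 1 := by
    rw [SimpleGraph.degree, hnbrv, Finset.card_erase_of_mem hvs, hcard]
  -- the eigenvector
  set x : V → ℝ := fun z => (if z = u then (1:ℝ) else 0) - (if z = v then 1 else 0) with hxdef
  have hx0 : x ≠ 0 := by
    intro h
    have := congrFun h u
    simp [hxdef, huv] at this
  have hsum : ∀ i : V, ∑ z ∈ G.neighborFinset i, x z =
      (if u ∈ G.neighborFinset i then (1:ℝ) else 0)
      - (if v ∈ G.neighborFinset i then 1 else 0) := by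
    intro i
    rw [hxdef]
    rw [Finset.sum_sub_distrib, Finset.sum_ite_eq' _ u (fun _ => (1:ℝ)),
      Finset.sum_ite_eq' _ v (fun _ => (1:ℝ))]
  have hdcast : ((d - 1 : ℕ) : ℝ) = (d : ℝ) - 1 := by
    rw [Nat.cast_sub (by omega)]; norm_num
  have hLx : Matrix.toLin' (G.lapMatrix ℝ) x = (d : ℝ) • x := by
    rw [Matrix.toLin'_apply]
    funext i
    rw [SimpleGraph.lapMatrix_mulVec_apply, hsum i, Pi.smul_apply]
    by_cases hiu : i = u
    · have huu : u ∉ G.neighborFinset u := by simp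
      have hvu : v ∈ G.neighborFinset u := by
        rw [hnbru, mem_erase]; exact ⟨fun h => huv h.symm, hvs⟩
      have hxu : x u = 1 := by simp [hxdef, huv]
      rw [hiu, hdegu, hdcast, if_neg huu, if_pos hvu, hxu, smul_eq_mul]
      ring
    · by_cases hiv : i = v
      · have hvv : v ∉ G.neighborFinset v := by simp
        have huv' : u ∈ G.neighborFinset v := by
          rw [hnbrv, mem_erase]; exact ⟨huv, hus⟩
        have hxv : x v = -1 := by simp [hxdef, huv.symm]
        rw [hiv, hdegv, hdcast, if_pos huv', if_neg hvv, hxv, smul_eq_mul]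
        ring
      · have hiff : u ∈ G.neighborFinset i ↔ v ∈ G.neighborFinset i := by
          simp only [SimpleGraph.mem_neighborFinset]
          constructor
          · intro h
            have his : i ∈ s := hNu i h.symm
            exact hclique his hvs hiv
          · intro h
            have his : i ∈ s := hNv i h.symm
            exact hclique his hus hiu
        have hxi : x i = 0 := by simp [hxdef, hiu, hiv]
        rw [hxi]
        by_cases h : u ∈ G.neighborFinset i
        · rw [if_pos h, if_pos (hiff.mp h)]; simp
        · rw [if_neg h, if_neg (fun hv' => h (hiff.mpr hv'))]; simp
  exact heig (Module.End.hasEigenvalue_of_hasEigenvector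
    ⟨Module.End.mem_eigenspace_iff.mpr hLx, hx0⟩)
end
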